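/- Let Φ be the root system of type A₂ with positive roots α₁, α₂, α₁+α₂, and set Δ₀ = {α₁, α₂, -(α₁+α₂)}. Then the three elements of Δ₀ sum to zero. Consequently, for any regular ξ (i.e. ξ with α(ξ) ≠ 0 for all α ∈ Φ) and any w in the Weyl group S₃, among the three values (wα)(ξ), α ∈ Δ₀, at least one is positive and at least one is negative; hence no function f : S₃ → ℝ can be strictly increasing along all edges (w, wσ_α) with (wα)(ξ) > 0 and also attain a minimum at a vertex all of whose outgoing edge labels are positive on ξ — i.e. there is no Morse function compatible with any ξ for this axial function. -/

import Mathlib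

/-!
The three labels `wα₁, wα₂, w(-(α₁+α₂))` at a vertex `w` sum to zero, and they are roots
because the Weyl group permutes `Φ`; for regular `ξ` they are nonzero, so at every vertex some
edge ascends and some edge descends. Since the Weyl group is finite (the braid relation
`s₁s₂s₁ = s₂s₁s₂` leaves at most six elements), a function strictly increasing along ascending
edges would have no maximum on it, which is absurd.
-/

noncomputable def sref {E : Type*} [NormedAddCommGroup E] [InnerProductSpace ℝ E]
    [FiniteDimensional ℝ E] (α : E) : E ≃ₗᵢ[ℝ] E :=
  Submodule.reflection (ℝ ∙ α)ᗮ

theorem exists_pos_and_exists_neg_of_add_add_eq_zero {M : Type*} [AddCommGroup M] [LinearOrder M]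
    [IsOrderedAddMonoid M] {a b c : M} (ha : a ≠ 0) (hb : b ≠ 0) (hc : c ≠ 0)
    (h : a + b + c = 0) : (0 < a ∨ 0 < b ∨ 0 < c) ∧ (a < 0 ∨ b < 0 ∨ c < 0) := by
  constructor <;> by_contra! hcon <;> obtain ⟨ha', hb', hc'⟩ := hcon
  · exact (add_neg (add_neg (ha'.lt_of_ne ha) (hb'.lt_of_ne hb)) (hc'.lt_of_ne hc)).ne h
  · exact (add_pos (add_pos (ha'.lt_of_ne' ha) (hb'.lt_of_ne' hb)) (hc'.lt_of_ne' hc)).ne' h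

theorem Set.Finite.not_forall_exists_lt {α β : Type*} [LinearOrder β] {s : Set α}
    (hs : s.Finite) (hne : s.Nonempty) (f : α → β) : ¬ ∀ x ∈ s, ∃ y ∈ s, f x < f y := by
  obtain ⟨a, ha, hmax⟩ := Set.exists_max_image s f hs hne
  intro h
  obtain ⟨b, hb, hlt⟩ := h a ha
  exact (hmax b hb).not_gt hlt

theorem Subgroup.closure_pair_finite_of_braid {G : Type*} [Group G] {s t : G} (hs : s * s = 1)
    (ht : t * t = 1) (hst : s * t * s = t * s * t) :
    (Subgroup.closure {s, t} : Set G).Finite := by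
  have hs' : ∀ x, s * (s * x) = x := fun x => by rw [← mul_assoc, hs, one_mul]
  have hts : t * (s * t) = s * (t * s) := by simp only [← mul_assoc, hst]
  have closed : ∀ x ∈ ({1, s, t, s * t, t * s, s * t * s} : Set G), ∀ y ∈ ({s, t} : Set G),
      x * y ∈ ({1, s, t, s * t, t * s, s * t * s} : Set G) := by
    rintro x (rfl | rfl | rfl | rfl | rfl | rfl) y (rfl | rfl) <;>
      simp [mul_assoc, hs, ht, hs', hts]
  refine (Set.toFinite {1, s, t, s * t, t * s, s * t * s}).subset fun x hx => ?_
  induction hx using Subgroup.closure_induction_right with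
  | one => simp
  | mul_right x _ y hy ih => exact closed x ih y hy
  | mul_inv_cancel x _ y hy ih =>
    obtain rfl | rfl := hy
    · rw [inv_eq_of_mul_eq_one_right hs]; exact closed x ih _ (by simp)
    · rw [inv_eq_of_mul_eq_one_right ht]; exact closed x ih _ (by simp)

section Reflection

variable {E : Type*} [NormedAddCommGroup E] [InnerProductSpace ℝ E] [FiniteDimensional ℝ E]

theorem sref_mul_self (v : E) : sref v * sref v = 1 :=
  Submodule.reflection_mul_reflection _

theorem sref_inv (v : E) : (sref v)⁻¹ = sref v :=
  Submodule.reflection_inv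

theorem sref_self (v : E) : sref v v = -v :=
  Submodule.reflection_orthogonalComplement_singleton_eq_neg v

theorem sref_neg (v : E) : sref (-v) = sref v := by
  simp only [sref, ← Set.neg_singleton, Submodule.span_neg]

theorem sref_map (g : E ≃ₗᵢ[ℝ] E) (v : E) : sref (g v) = g * sref v * g⁻¹ := by
  ext x
  have : (ℝ ∙ g v)ᗮ = (ℝ ∙ v)ᗮ.map (g.toLinearEquiv : E →ₗ[ℝ] E) := by
    rw [Submodule.map_orthogonal_equiv, Submodule.map_span, Set.image_singleton]
    rfl
  simp only [sref, this, Submodule.reflection_map_apply]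
  rfl

theorem sref_apply_of_inner_self_eq_two {v : E} (hv : inner ℝ v v = (2 : ℝ)) (x : E) :
    sref v x = x - inner ℝ v x • v := by
  have hnorm : ‖v‖ ^ 2 = 2 := by rw [← real_inner_self_eq_norm_sq, hv]
  rw [sref, Submodule.reflection_orthogonal_apply, Submodule.reflection_singleton_apply]
  simp only [Real.ringHom_apply, hnorm]
  module

end Reflection

def a2Roots {E : Type*} [AddCommGroup E] (α₁ α₂ : E) : Set E :=
  {α₁, -α₁, α₂, -α₂, α₁ + α₂, -(α₁ + α₂)}

theorem a2Roots_comm {E : Type*} [AddCommGroup E] (α₁ α₂ : E) :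
    a2Roots α₂ α₁ = a2Roots α₁ α₂ := by
  ext x
  simp only [a2Roots, Set.mem_insert_iff, Set.mem_singleton_iff, add_comm α₂ α₁]
  tauto

section A2

variable {E : Type*} [NormedAddCommGroup E] [InnerProductSpace ℝ E] [FiniteDimensional ℝ E]

noncomputable def a2Weyl (α₁ α₂ : E) : Subgroup (E ≃ₗᵢ[ℝ] E) :=
  Subgroup.closure {sref α₁, sref α₂}

variable {α₁ α₂ : E}

theorem sref_apply_of_inner_eq_neg_one (h11 : inner ℝ α₁ α₁ = (2 : ℝ))
    (h12 : inner ℝ α₁ α₂ = (-1 : ℝ)) : sref α₁ α₂ = α₁ + α₂ := by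
  rw [sref_apply_of_inner_self_eq_two h11, h12]
  module

theorem sref_apply_add_of_inner_eq_neg_one (h11 : inner ℝ α₁ α₁ = (2 : ℝ))
    (h12 : inner ℝ α₁ α₂ = (-1 : ℝ)) : sref α₁ (α₁ + α₂) = α₂ := by
  rw [map_add, sref_self, sref_apply_of_inner_eq_neg_one h11 h12]
  abel

theorem mapsTo_sref_a2Roots (h11 : inner ℝ α₁ α₁ = (2 : ℝ))
    (h12 : inner ℝ α₁ α₂ = (-1 : ℝ)) : Set.MapsTo (sref α₁) (a2Roots α₁ α₂) (a2Roots α₁ α₂) := by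
  rintro x (rfl | rfl | rfl | rfl | rfl | rfl) <;>
    simp [a2Roots, map_neg, sref_self, sref_apply_of_inner_eq_neg_one h11 h12,
      sref_apply_add_of_inner_eq_neg_one h11 h12]

theorem sref_add_eq_of_inner_eq_neg_one (h11 : inner ℝ α₁ α₁ = (2 : ℝ))
    (h12 : inner ℝ α₁ α₂ = (-1 : ℝ)) : sref (α₁ + α₂) = sref α₁ * sref α₂ * sref α₁ := by
  rw [← sref_apply_of_inner_eq_neg_one h11 h12, sref_map, sref_inv]

theorem sref_mem_a2Weyl (h11 : inner ℝ α₁ α₁ = (2 : ℝ)) (h12 : inner ℝ α₁ α₂ = (-1 : ℝ))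
    {α : E} (hα : α ∈ ({α₁, α₂, -(α₁ + α₂)} : Set E)) : sref α ∈ a2Weyl α₁ α₂ := by
  have hm1 : sref α₁ ∈ a2Weyl α₁ α₂ := Subgroup.subset_closure (by simp)
  have hm2 : sref α₂ ∈ a2Weyl α₁ α₂ := Subgroup.subset_closure (by simp)
  obtain rfl | rfl | rfl := hα
  · exact hm1
  · exact hm2
  · rw [sref_neg, sref_add_eq_of_inner_eq_neg_one h11 h12]
    exact mul_mem (mul_mem hm1 hm2) hm1

theorem mapsTo_a2Roots_of_mem_a2Weyl (h11 : inner ℝ α₁ α₁ = (2 : ℝ))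
    (h22 : inner ℝ α₂ α₂ = (2 : ℝ)) (h12 : inner ℝ α₁ α₂ = (-1 : ℝ)) {w : E ≃ₗᵢ[ℝ] E}
    (hw : w ∈ a2Weyl α₁ α₂) : Set.MapsTo w (a2Roots α₁ α₂) (a2Roots α₁ α₂) := by
  have h21 : inner ℝ α₂ α₁ = (-1 : ℝ) := by rw [real_inner_comm, h12]
  have hgen : ∀ s ∈ ({sref α₁, sref α₂} : Set (E ≃ₗᵢ[ℝ] E)),
      Set.MapsTo s (a2Roots α₁ α₂) (a2Roots α₁ α₂) := by
    rintro s (rfl | rfl)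
    · exact mapsTo_sref_a2Roots h11 h12
    · simpa only [a2Roots_comm] using mapsTo_sref_a2Roots h22 h21
  induction hw using Subgroup.closure_induction'' with
  | mem s hs => exact hgen s hs
  | inv_mem s hs => obtain rfl | rfl := hs <;> simpa only [sref_inv] using hgen _ (by simp)
  | one => exact Set.mapsTo_id _
  | mul _ _ _ _ hu hv => exact hu.comp hv

theorem a2Weyl_finite (h11 : inner ℝ α₁ α₁ = (2 : ℝ)) (h22 : inner ℝ α₂ α₂ = (2 : ℝ))
    (h12 : inner ℝ α₁ α₂ = (-1 : ℝ)) : (a2Weyl α₁ α₂ : Set (E ≃ₗᵢ[ℝ] E)).Finite := by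
  have h21 : inner ℝ α₂ α₁ = (-1 : ℝ) := by rw [real_inner_comm, h12]
  have hbraid : sref α₁ * sref α₂ * sref α₁ = sref α₂ * sref α₁ * sref α₂ := by
    rw [← sref_add_eq_of_inner_eq_neg_one h11 h12, ← sref_add_eq_of_inner_eq_neg_one h22 h21,
      add_comm]
  exact Subgroup.closure_pair_finite_of_braid (sref_mul_self _) (sref_mul_self _) hbraid

theorem exists_inner_pos_and_exists_inner_neg (h11 : inner ℝ α₁ α₁ = (2 : ℝ))
    (h22 : inner ℝ α₂ α₂ = (2 : ℝ)) (h12 : inner ℝ α₁ α₂ = (-1 : ℝ)) {ξ : E}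
    (hξ : ∀ β ∈ a2Roots α₁ α₂, inner ℝ β ξ ≠ (0 : ℝ)) {w : E ≃ₗᵢ[ℝ] E}
    (hw : w ∈ a2Weyl α₁ α₂) :
    (∃ α ∈ ({α₁, α₂, -(α₁ + α₂)} : Set E), 0 < (inner ℝ (w α) ξ : ℝ)) ∧
      (∃ α ∈ ({α₁, α₂, -(α₁ + α₂)} : Set E), (inner ℝ (w α) ξ : ℝ) < 0) := by
  have hroots := mapsTo_a2Roots_of_mem_a2Weyl h11 h22 h12 hw
  have hsum : inner ℝ (w α₁) ξ + inner ℝ (w α₂) ξ + inner ℝ (w (-(α₁ + α₂))) ξ = (0 : ℝ) := by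
    rw [map_neg, map_add, inner_neg_left, inner_add_left]
    ring
  have hsigns := exists_pos_and_exists_neg_of_add_add_eq_zero
    (hξ _ (hroots (by simp [a2Roots]))) (hξ _ (hroots (by simp [a2Roots])))
    (hξ _ (hroots (by simp [a2Roots]))) hsum
  simpa only [Set.mem_insert_iff, Set.mem_singleton_iff, exists_eq_or_imp, exists_eq_left]
    using hsigns

end A2

/-- For the `A₂` root system (Gram data `⟨αᵢ,αᵢ⟩ = 2`, `⟨α₁,α₂⟩ = -1`) with
`Δ₀ = {α₁, α₂, -(α₁+α₂)}`: the three elements of `Δ₀` sum to zero; hence for any regular `ξ`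
and any `w` in the Weyl group `W = S₃`, among the labels `wα`, `α ∈ Δ₀`, of the edges issuing
from the vertex `w`, at least one pairs positively and at least one pairs negatively with `ξ`;
and there is no Morse function on the GKM graph compatible with `ξ` for this axial function. -/
theorem a2_nonintegrable_no_morse_function
    {E : Type*} [NormedAddCommGroup E] [InnerProductSpace ℝ E] [FiniteDimensional ℝ E]
    (α₁ α₂ : E) (h11 : (inner ℝ α₁ α₁ : ℝ) = 2) (h22 : (inner ℝ α₂ α₂ : ℝ) = 2)
    (h12 : (inner ℝ α₁ α₂ : ℝ) = -1) :
    α₁ + α₂ + (-(α₁ + α₂)) = 0 ∧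
      ∀ ξ : E,
        (∀ β ∈ ({α₁, -α₁, α₂, -α₂, α₁ + α₂, -(α₁ + α₂)} : Set E), (inner ℝ β ξ : ℝ) ≠ 0) →
        (∀ w ∈ Subgroup.closure {sref α₁, sref α₂},
          (∃ α ∈ ({α₁, α₂, -(α₁ + α₂)} : Set E), 0 < (inner ℝ (w α) ξ : ℝ)) ∧
          (∃ α ∈ ({α₁, α₂, -(α₁ + α₂)} : Set E), (inner ℝ (w α) ξ : ℝ) < 0)) ∧
        ¬ ∃ f : (E ≃ₗᵢ[ℝ] E) → ℝ, ∀ w ∈ Subgroup.closure {sref α₁, sref α₂},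
            ∀ α ∈ ({α₁, α₂, -(α₁ + α₂)} : Set E),
              0 < (inner ℝ (w α) ξ : ℝ) → f w < f (w * sref α) := by
  refine ⟨by abel, fun ξ hξ =>
    ⟨fun w hw => exists_inner_pos_and_exists_inner_neg h11 h22 h12 hξ hw, ?_⟩⟩
  rintro ⟨f, hf⟩
  refine (a2Weyl_finite h11 h22 h12).not_forall_exists_lt ⟨1, one_mem _⟩ f fun w hw => ?_
  obtain ⟨α, hα, hpos⟩ := (exists_inner_pos_and_exists_inner_neg h11 h22 h12 hξ hw).1
  exact ⟨w * sref α, mul_mem hw (sref_mem_a2Weyl h11 h12 hα), hf w hw α hα hpos⟩
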